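/- arXiv:math/0311004 — 6 statements merged into one kernel-verified Lean document; each statement's English description precedes it below -/
import Mathlib

section
/- Let p_1,...,p_n and q_1,...,q_n be points in ℝ^m. If ‖p_i - p_j‖ = ‖q_i - q_j‖ for all i, j = 1,...,n, then there exists an orthogonal m×m matrix M and a vector T ∈ ℝ^m such that M p_i + T = q_i for every i = 1,...,n. -/
/-!
Translate so that `p i₀` and `q i₀` are at the origin. By polarization, equal distances give equal
Gram matrices of the difference vectors `vᵢ`, `wᵢ`, so `c ↦ ∑ cᵢ vᵢ` and `c ↦ ∑ cᵢ wᵢ` have equal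
norms. Then `∑ cᵢ vᵢ ↦ ∑ cᵢ wᵢ` is a well-defined isometry on the span of the `vᵢ`, which extends to
the whole space by any isometry between orthogonal complements; its matrix in the standard basis
is orthogonal.
-/

open scoped InnerProductSpace

section

variable {𝕜 E V : Type*} [RCLike 𝕜] [NormedAddCommGroup E] [InnerProductSpace 𝕜 E]
  [FiniteDimensional 𝕜 E] [AddCommGroup V] [Module 𝕜 V]

theorem LinearMap.exists_linearIsometry_comp_eq_of_norm_eq {A B : V →ₗ[𝕜] E}
    (h : ∀ x, ‖A x‖ = ‖B x‖) : ∃ L : E →ₗᵢ[𝕜] E, L.toLinearMap ∘ₗ A = B := by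
  have hker : ker A ≤ ker B := fun x hx => by
    rwa [mem_ker, ← norm_eq_zero, ← h, norm_eq_zero]
  let g : range A →ₗ[𝕜] E := (ker A).liftQ B hker ∘ₗ A.quotKerEquivRange.symm.toLinearMap
  have hg : ∀ x, g ⟨A x, mem_range_self A x⟩ = B x := fun x => by
    simp [g, quotKerEquivRange_symm_apply_image]
  let gi : range A →ₗᵢ[𝕜] E := ⟨g, by rintro ⟨_, x, rfl⟩; simpa [hg] using (h x).symm⟩
  exact ⟨gi.extend, LinearMap.ext fun x => (gi.extend_apply ⟨A x, _⟩).trans (hg x)⟩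

theorem exists_linearIsometry_apply_eq_of_inner_eq {ι : Type*} [Fintype ι] {v w : ι → E}
    (h : ∀ i j, ⟪v i, v j⟫_𝕜 = ⟪w i, w j⟫_𝕜) : ∃ L : E →ₗᵢ[𝕜] E, ∀ i, L (v i) = w i := by
  classical
  have hnorm (c : ι → 𝕜) :
      ‖Fintype.linearCombination 𝕜 v c‖ = ‖Fintype.linearCombination 𝕜 w c‖ := by
    simp only [@norm_eq_sqrt_re_inner 𝕜, Fintype.linearCombination_apply, sum_inner, inner_sum,
      inner_smul_left, inner_smul_right, h]
  obtain ⟨L, hL⟩ := LinearMap.exists_linearIsometry_comp_eq_of_norm_eq hnorm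
  refine ⟨L, fun i => ?_⟩
  simpa using LinearMap.congr_fun hL (Pi.single i 1)

end

theorem exists_linearIsometry_add_eq_of_dist_eq {E ι : Type*} [NormedAddCommGroup E]
    [InnerProductSpace ℝ E] [FiniteDimensional ℝ E] [Fintype ι] {p q : ι → E}
    (h : ∀ i j, dist (p i) (p j) = dist (q i) (q j)) :
    ∃ L : E →ₗᵢ[ℝ] E, ∃ T : E, ∀ i, L (p i) + T = q i := by
  obtain _ | ⟨⟨i₀⟩⟩ := isEmpty_or_nonempty ι
  · exact ⟨LinearIsometry.id, 0, isEmptyElim⟩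
  have hinner (i j : ι) : ⟪p i - p i₀, p j - p i₀⟫_ℝ = ⟪q i - q i₀, q j - q i₀⟫_ℝ := by
    simp only [real_inner_eq_norm_mul_self_add_norm_mul_self_sub_norm_sub_mul_self_div_two,
      sub_sub_sub_cancel_right, ← dist_eq_norm, h]
  obtain ⟨L, hL⟩ := exists_linearIsometry_apply_eq_of_inner_eq hinner
  refine ⟨L, q i₀ - L (p i₀), fun i => ?_⟩
  have hi := hL i
  rw [map_sub, sub_eq_iff_eq_add] at hi
  rw [hi]
  abel

theorem LinearIsometry.toEuclideanLin_symm_mem_orthogonalGroup {ι : Type*} [Fintype ι]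
    [DecidableEq ι] (L : EuclideanSpace ℝ ι →ₗᵢ[ℝ] EuclideanSpace ℝ ι) :
    Matrix.toEuclideanLin.symm L.toLinearMap ∈ Matrix.orthogonalGroup ι ℝ := by
  rw [Matrix.toEuclideanLin_eq_toLin_orthonormal]
  exact (L.toLinearIsometryEquiv rfl).toMatrix_mem_unitaryGroup
    (EuclideanSpace.basisFun ι ℝ) (EuclideanSpace.basisFun ι ℝ)

theorem stmt_0 (m n : ℕ) (p q : Fin n → EuclideanSpace ℝ (Fin m))
    (h : ∀ i j, dist (p i) (p j) = dist (q i) (q j)) :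
    ∃ M : Matrix (Fin m) (Fin m) ℝ, M ∈ Matrix.orthogonalGroup (Fin m) ℝ ∧
      ∃ T : EuclideanSpace ℝ (Fin m),
        ∀ i, (WithLp.equiv 2 (Fin m → ℝ)).symm (M.mulVec (p i)) + T = q i := by
  obtain ⟨L, T, hLT⟩ := exists_linearIsometry_add_eq_of_dist_eq h
  refine ⟨_, L.toEuclideanLin_symm_mem_orthogonalGroup, T, fun i => ?_⟩
  rw [← hLT i]
  congr 1
  exact LinearMap.congr_fun (Matrix.toEuclideanLin.apply_symm_apply L.toLinearMap) (p i)
end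

section
/- Let n ≥ 5 and let 𝒫 be the set of unordered pairs {i,j} with i ≠ j, i,j ∈ {1,...,n}. If φ is a permutation of 𝒫 such that for all pairwise distinct i,j,k we have φ·{i,j} ∩ φ·{i,k} ≠ ∅, then for all pairwise distinct i,j,k,l we have φ·{i,j} ∩ φ·{i,k} ∩ φ·{i,l} ≠ ∅. -/
/-- The unordered pair `{i, j}` (with `i ≠ j`) as an off-diagonal element of `Sym2 (Fin n)`. -/
def pair {n : ℕ} (i j : Fin n) (h : i ≠ j) : {z : Sym2 (Fin n) // ¬ z.IsDiag} :=
  ⟨s(i, j), by simpa using h⟩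

theorem stmt_1 (n : ℕ) (hn : 5 ≤ n) (φ : Equiv.Perm {z : Sym2 (Fin n) // ¬ z.IsDiag})
    (hadj : ∀ (i j k : Fin n) (hij : i ≠ j) (hik : i ≠ k), j ≠ k →
      ∃ x, x ∈ (φ (pair i j hij)).val ∧ x ∈ (φ (pair i k hik)).val) :
    ∀ (i j k l : Fin n) (hij : i ≠ j) (hik : i ≠ k) (hil : i ≠ l),
      j ≠ k → j ≠ l → k ≠ l →
      ∃ x, x ∈ (φ (pair i j hij)).val ∧ x ∈ (φ (pair i k hik)).val ∧
        x ∈ (φ (pair i l hil)).val := by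
  intro i j k l hij hik hil hjk hjl hkl
  obtain ⟨x, hx1, hx2⟩ := hadj i j k hij hik hjk
  obtain ⟨y, hy1, hy3⟩ := hadj i j l hij hil hjl
  obtain ⟨z, hz2, hz3⟩ := hadj i k l hik hil hkl
  by_cases hxy : x = y
  · exact ⟨x, hx1, hx2, hxy ▸ hy3⟩
  by_cases hxz : x = z
  · exact ⟨x, hx1, hx2, hxz ▸ hz3⟩
  by_cases hyz : y = z
  · exact ⟨y, hy1, hyz ▸ hz2, hy3⟩
  exfalso
  -- the three images form a triangle s(x,y), s(x,z), s(y,z)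
  have he1 : (φ (pair i j hij)).val = s(x, y) :=
    (Sym2.mem_and_mem_iff hxy).mp ⟨hx1, hy1⟩
  have he2 : (φ (pair i k hik)).val = s(x, z) :=
    (Sym2.mem_and_mem_iff hxz).mp ⟨hx2, hz2⟩
  have he3 : (φ (pair i l hil)).val = s(y, z) :=
    (Sym2.mem_and_mem_iff hyz).mp ⟨hy3, hz3⟩
  -- pick a fifth vertex m
  have hcard : ({i, j, k, l} : Finset (Fin n)).card < Fintype.card (Fin n) := by
    have h4 : ({i, j, k, l} : Finset (Fin n)).card ≤ 4 := by
      apply le_trans (Finset.card_insert_le _ _)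
      apply Nat.succ_le_succ
      apply le_trans (Finset.card_insert_le _ _)
      apply Nat.succ_le_succ
      apply le_trans (Finset.card_insert_le _ _)
      apply Nat.succ_le_succ
      simp
    have : (4 : ℕ) < Fintype.card (Fin n) := by
      rw [Fintype.card_fin]; omega
    omega
  have hss : ({i, j, k, l} : Finset (Fin n)) ⊂ Finset.univ :=
    Finset.ssubset_univ_iff.mpr (fun h => by rw [h, Finset.card_univ] at hcard; omega)
  obtain ⟨m, -, hm⟩ := Finset.exists_of_ssubset hss
  simp only [Finset.mem_insert, Finset.mem_singleton, not_or] at hm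
  obtain ⟨hmi, hmj, hmk, hml⟩ := hm
  have him : i ≠ m := Ne.symm hmi
  -- φ (pair i m) is distinct from each of the triangle edges
  have key : ∀ (t : Fin n) (hit : i ≠ t), m ≠ t →
      (φ (pair i m him)).val ≠ (φ (pair i t hit)).val := by
    intro t hit hmt heq
    have h' := φ.injective (Subtype.ext heq)
    have h'' : s(i, m) = s(i, t) := congrArg Subtype.val h'
    rw [Sym2.eq_iff] at h''
    rcases h'' with ⟨-, h⟩ | ⟨h1, h2⟩
    · exact hmt h
    · exact him h2.symm
  -- but it meets all three triangle edges
  obtain ⟨w1, hw1m, hw11⟩ := hadj i m j him hij hmj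
  obtain ⟨w2, hw2m, hw22⟩ := hadj i m k him hik hmk
  obtain ⟨w3, hw3m, hw33⟩ := hadj i m l him hil hml
  rw [he1, Sym2.mem_iff] at hw11
  rw [he2, Sym2.mem_iff] at hw22
  rw [he3, Sym2.mem_iff] at hw33
  have tri : ∀ a b : Fin n, a ≠ b → a ∈ (φ (pair i m him)).val →
      b ∈ (φ (pair i m him)).val →
      ∀ (t : Fin n) (hit : i ≠ t), m ≠ t →
      (φ (pair i t hit)).val = s(a, b) → False := by
    intro a b hab ha hb t hit hmt het
    exact key t hit hmt (((Sym2.mem_and_mem_iff hab).mp ⟨ha, hb⟩).trans het.symm)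
  rcases hw11 with h1 | h1
  · rcases hw22 with h2 | h2
    · rcases hw33 with h3 | h3
      · exact tri x y hxy (h1 ▸ hw1m) (h3 ▸ hw3m) j hij hmj he1
      · exact tri x z hxz (h1 ▸ hw1m) (h3 ▸ hw3m) k hik hmk he2
    · exact tri x z hxz (h1 ▸ hw1m) (h2 ▸ hw2m) k hik hmk he2
  · rcases hw22 with h2 | h2
    · exact tri x y hxy (h2 ▸ hw2m) (h1 ▸ hw1m) j hij hmj he1
    · exact tri y z hyz (h1 ▸ hw1m) (h2 ▸ hw2m) l hil hml he3
end

section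
/- Let n ≠ 4 and let 𝒫 be the set of 2-element subsets of {1,...,n}. A permutation φ of 𝒫 satisfies φ·{i,j} ∩ φ·{i,k} ≠ ∅ for all pairwise distinct i,j,k ∈ {1,...,n} if and only if φ is a relabeling, i.e., there exists a permutation π of {1,...,n} such that φ·{i,j} = {π(i), π(j)} for all {i,j} ∈ 𝒫. -/
open Finset Function

namespace Sym2

variable {α : Type*}

theorem mem_of_meet_pair_of_notMem {v w : α} {z : Sym2 α} (hmeet : ∃ x, x ∈ z ∧ x ∈ s(v, w))
    (hv : v ∉ z) : w ∈ z := by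
  obtain ⟨x, hxz, hx⟩ := hmeet
  rcases mem_iff.1 hx with rfl | rfl
  exacts [absurd hxz hv, hxz]

theorem mem_of_meet_three_pairs {v w₁ w₂ w₃ : α} {z : Sym2 α}
    (h₁₂ : w₁ ≠ w₂) (h₁₃ : w₁ ≠ w₃) (h₂₃ : w₂ ≠ w₃) (h₁ : ∃ x, x ∈ z ∧ x ∈ s(v, w₁))
    (h₂ : ∃ x, x ∈ z ∧ x ∈ s(v, w₂)) (h₃ : ∃ x, x ∈ z ∧ x ∈ s(v, w₃)) : v ∈ z := by
  by_contra hv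
  have hz : z = s(w₁, w₂) :=
    (mem_and_mem_iff h₁₂).1 ⟨mem_of_meet_pair_of_notMem h₁ hv, mem_of_meet_pair_of_notMem h₂ hv⟩
  rcases mem_iff.1 (hz ▸ mem_of_meet_pair_of_notMem h₃ hv) with h | h
  exacts [h₁₃ h.symm, h₂₃ h.symm]

theorem exists_eq_pairs_of_meet {z z' : Sym2 α} (hne : z ≠ z') (hmeet : ∃ x, x ∈ z ∧ x ∈ z') :
    ∃ x y y', y ≠ y' ∧ z = s(x, y) ∧ z' = s(x, y') := by
  obtain ⟨x, hx, hx'⟩ := hmeet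
  obtain ⟨y, rfl⟩ := mem_iff_exists.1 hx
  obtain ⟨y', rfl⟩ := mem_iff_exists.1 hx'
  exact ⟨x, y, y', fun h => hne (h ▸ rfl), rfl, rfl⟩

theorem exists_forall_mem_of_pairwise_meet {ι : Type*} [Fintype ι] {f : ι → Sym2 α}
    (hf : Injective f) (hι : 4 ≤ Fintype.card ι)
    (hmeet : Pairwise fun a b => ∃ x, x ∈ f a ∧ x ∈ f b) : ∃ v, ∀ k, v ∈ f k := by
  classical
  obtain ⟨a, b, hab⟩ := Fintype.exists_pair_of_one_lt_card (α := ι) (by omega)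
  obtain ⟨x, y₁, y₂, hy₁₂, ha, hb⟩ := exists_eq_pairs_of_meet (hf.ne hab) (hmeet hab)
  -- A pair `f c` other than `f a`, `f b` and the pair `s(y₁, y₂)` closing their triangle passes
  -- through `x`; three pairs through `x` then force every `f k` through `x`.
  have hclosing : #(univ.filter (f · = s(y₁, y₂))) ≤ 1 :=
    card_le_one.2 fun c hc d hd => hf ((mem_filter.1 hc).2.trans (mem_filter.1 hd).2.symm)
  have hsmall : #({a, b} ∪ univ.filter (f · = s(y₁, y₂))) < #(univ : Finset ι) := by
    have := card_union_le {a, b} (univ.filter (f · = s(y₁, y₂)))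
    have := card_le_two (a := a) (b := b)
    rw [card_univ]
    omega
  obtain ⟨c, -, hc⟩ := exists_mem_notMem_of_card_lt_card hsmall
  simp only [mem_union, mem_insert, mem_singleton, mem_filter, mem_univ, true_and,
    not_or] at hc
  obtain ⟨⟨hca, hcb⟩, hcy⟩ := hc
  have hxc : x ∈ f c := by
    by_contra hx
    exact hcy ((mem_and_mem_iff hy₁₂).1
      ⟨mem_of_meet_pair_of_notMem (ha ▸ hmeet hca) hx,
        mem_of_meet_pair_of_notMem (hb ▸ hmeet hcb) hx⟩)
  obtain ⟨y₃, hc⟩ := mem_iff_exists.1 hxc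
  have hmeet' : ∀ k l, ∃ x, x ∈ f k ∧ x ∈ f l := by
    intro k l
    rcases eq_or_ne k l with rfl | hkl
    exacts [⟨_, out_fst_mem _, out_fst_mem _⟩, hmeet hkl]
  refine ⟨x, fun k => mem_of_meet_three_pairs hy₁₂ ?_ ?_ (ha ▸ hmeet' k a) (hb ▸ hmeet' k b)
    (hc ▸ hmeet' k c)⟩
  · rintro rfl; exact hf.ne hca (hc.trans ha.symm)
  · rintro rfl; exact hf.ne hcb (hc.trans hb.symm)

end Sym2

section IncidentPairs

variable {α : Type*} [Fintype α] [DecidableEq α]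

def incidentPairs (v : α) : Finset {z : Sym2 α // ¬ z.IsDiag} :=
  univ.filter (v ∈ ·.val)

theorem card_incidentPairs (v : α) : #(incidentPairs v) = Fintype.card α - 1 := by
  rw [← card_univ, ← card_erase_of_mem (mem_univ v)]
  refine card_bij' (fun z hz => Sym2.Mem.other (mem_filter.1 hz).2)
    (fun w hw => ⟨s(v, w), by simpa using (ne_of_mem_erase hw).symm⟩) ?_ ?_ ?_ ?_
  · intro z hz
    exact mem_erase.2 ⟨Sym2.other_ne z.2 _, mem_univ _⟩
  · intro w _
    simp [incidentPairs]
  · intro z _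
    exact Subtype.ext (Sym2.other_spec _)
  · intro w _
    exact Sym2.congr_right.1 (Sym2.other_spec _)

theorem incidentPairs_injective (hα : 3 ≤ Fintype.card α) :
    Injective (incidentPairs (α := α)) := by
  intro i j hij
  by_contra hne
  obtain ⟨k, -, hk⟩ := exists_mem_notMem_of_card_lt_card
    (s := {i, j}) (t := univ) (by rw [card_univ]; exact card_le_two.trans_lt (by omega))
  simp only [mem_insert, mem_singleton, not_or] at hk
  have hik : ⟨s(i, k), by simpa using Ne.symm hk.1⟩ ∈ incidentPairs j := by
    rw [← hij]
    simp [incidentPairs]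
  simp [incidentPairs, Ne.symm hne, Ne.symm hk.2] at hik

theorem map_incidentPairs_eq {φ : Equiv.Perm {z : Sym2 α // ¬ z.IsDiag}} {i v : α}
    (hv : ∀ z ∈ incidentPairs i, v ∈ (φ z).val) :
    (incidentPairs i).map φ.toEmbedding = incidentPairs v := by
  refine eq_of_subset_of_card_le ?_ (by simp [card_incidentPairs])
  intro z hz
  obtain ⟨y, hy, rfl⟩ := mem_map.1 hz
  simpa [incidentPairs] using hv y hy

theorem exists_perm_map_eq_of_pairwise_meet (hα : 5 ≤ Fintype.card α)
    (φ : Equiv.Perm {z : Sym2 α // ¬ z.IsDiag})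
    (hφ : ∀ i : α, (incidentPairs i : Set _).Pairwise
      fun z z' => ∃ x, x ∈ (φ z).val ∧ x ∈ (φ z').val) :
    ∃ π : Equiv.Perm α, ∀ z, (φ z).val = z.val.map π := by
  have hcenter : ∀ i, ∃ v, ∀ z ∈ incidentPairs i, v ∈ (φ z).val := by
    intro i
    obtain ⟨v, hv⟩ := Sym2.exists_forall_mem_of_pairwise_meet
      (f := fun z : incidentPairs i => (φ z).val)
      (Subtype.val_injective.comp (φ.injective.comp Subtype.val_injective))
      (by simp only [Fintype.card_coe, card_incidentPairs]; omega)
      (fun z z' hne => hφ i z.2 z'.2 (Subtype.coe_ne_coe.2 hne))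
    exact ⟨v, fun z hz => hv ⟨z, hz⟩⟩
  choose v hv using hcenter
  have hmap i := map_incidentPairs_eq (hv i)
  have hinj : Injective v := fun i j h =>
    incidentPairs_injective (by omega) (map_injective _ ((hmap i).trans (h ▸ hmap j).symm))
  refine ⟨Equiv.ofBijective v hinj.bijective_of_finite, fun ⟨z, hz⟩ => ?_⟩
  induction z using Sym2.ind with
  | h i j =>
    have hij : i ≠ j := by simpa using hz
    exact (Sym2.mem_and_mem_iff (hinj.ne hij)).1
      ⟨hv i _ (by simp [incidentPairs]), hv j _ (by simp [incidentPairs])⟩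

end IncidentPairs

theorem exists_pair_eq_of_mem_incidentPairs {n : ℕ} {i : Fin n}
    {z : {z : Sym2 (Fin n) // ¬ z.IsDiag}} (hz : z ∈ incidentPairs i) :
    ∃ j, ∃ h : i ≠ j, pair i j h = z := by
  have hi : i ∈ z.val := (mem_filter.1 hz).2
  exact ⟨_, (Sym2.other_ne z.2 hi).symm, Subtype.ext (Sym2.other_spec hi)⟩

theorem stmt_2 (n : ℕ) (hn : n ≠ 4) (φ : Equiv.Perm {z : Sym2 (Fin n) // ¬ z.IsDiag}) :
    (∀ (i j k : Fin n) (hij : i ≠ j) (hik : i ≠ k), j ≠ k →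
        ∃ x, x ∈ (φ (pair i j hij)).val ∧ x ∈ (φ (pair i k hik)).val) ↔
      ∃ π : Equiv.Perm (Fin n), ∀ (i j : Fin n) (h : i ≠ j),
        (φ (pair i j h)).val = s(π i, π j) := by
  rcases lt_or_ge n 5 with hn5 | hn5
  · interval_cases n <;> first | (revert φ; decide) | exact absurd rfl hn
  constructor
  · intro H
    obtain ⟨π, hπ⟩ := exists_perm_map_eq_of_pairwise_meet (by simpa using hn5) φ
      fun i z hz z' hz' hne => by
        obtain ⟨j, hij, rfl⟩ := exists_pair_eq_of_mem_incidentPairs hz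
        obtain ⟨k, hik, rfl⟩ := exists_pair_eq_of_mem_incidentPairs hz'
        exact H i j k hij hik fun hjk => hne (by subst hjk; rfl)
    exact ⟨π, fun i j h => hπ _⟩
  · rintro ⟨π, hπ⟩ i j k hij hik -
    exact ⟨π i, by simp [hπ], by simp [hπ]⟩
end

section
/- Let n ≥ 5 and let φ be a permutation of the set 𝒫 of 2-element subsets of {1,...,n} satisfying φ·{i,j} ∩ φ·{i,k} ≠ ∅ for all pairwise distinct i,j,k. Then for each fixed i ∈ {1,...,n}, the intersection ⋂_{j ≠ i} φ·{i,j} is nonempty, and hence consists of exactly one element σ(i); moreover the map σ : {1,...,n} → {1,...,n} so defined is injective. -/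
section Aux

variable {n : ℕ} (φ : Equiv.Perm {z : Sym2 (Fin n) // ¬ z.IsDiag})

lemma eval_inj {i j k : Fin n} (hij : i ≠ j) (hik : i ≠ k)
    (h : (φ (pair i j hij)).val = (φ (pair i k hik)).val) : j = k := by
  have h2 : pair i j hij = pair i k hik := φ.injective (Subtype.ext h)
  have h3 : s(i, j) = s(i, k) := congrArg Subtype.val h2
  rcases Sym2.eq_iff.mp h3 with ⟨_, h4⟩ | ⟨h4, h5⟩
  · exact h4
  · exact absurd h5.symm hij

lemma nondiag_eq {α : Type*} {z : Sym2 α} (h : ¬ z.IsDiag) :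
    ∃ a b, a ≠ b ∧ z = s(a, b) := by
  induction z using Sym2.ind with
  | _ a b => exact ⟨a, b, by simpa using h, rfl⟩

lemma exists_not_mem_finset (hn : 0 < n) (s : Finset (Fin n)) (h : s.card < n) :
    ∃ x, x ∉ s := by
  by_contra hc
  push_neg at hc
  have : s = Finset.univ := Finset.eq_univ_iff_forall.mpr hc
  simp [this] at h

lemma exists_common (hn : 5 ≤ n)
    (hadj : ∀ (i j k : Fin n) (hij : i ≠ j) (hik : i ≠ k), j ≠ k →
      ∃ x, x ∈ (φ (pair i j hij)).val ∧ x ∈ (φ (pair i k hik)).val)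
    (i : Fin n) : ∃ s : Fin n, ∀ j (h : i ≠ j), s ∈ (φ (pair i j h)).val := by
  classical
  have hn0 : 0 < n := by omega
  haveI : Nontrivial (Fin n) := Fin.nontrivial_iff_two_le.mpr (by omega)
  obtain ⟨j0, hj0⟩ := exists_ne i
  have h0 : i ≠ j0 := hj0.symm
  have hnd : ¬ ((φ (pair i j0 h0)).val).IsDiag := (φ (pair i j0 h0)).prop
  obtain ⟨a, b, hab, he0⟩ := nondiag_eq hnd
  have hab_mem : ∀ j (h : i ≠ j), j ≠ j0 →
      a ∈ (φ (pair i j h)).val ∨ b ∈ (φ (pair i j h)).val := by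
    intro j h hjj0
    obtain ⟨x, hx1, hx2⟩ := hadj i j j0 h h0 hjj0
    rw [he0] at hx2
    rcases Sym2.mem_iff.mp hx2 with rfl | rfl
    · exact Or.inl hx1
    · exact Or.inr hx1
  have haj0 : a ∈ (φ (pair i j0 h0)).val := by rw [he0]; simp
  have hbj0 : b ∈ (φ (pair i j0 h0)).val := by rw [he0]; simp
  by_cases hA : ∀ j (h : i ≠ j), a ∈ (φ (pair i j h)).val
  · exact ⟨a, hA⟩
  by_cases hB : ∀ j (h : i ≠ j), b ∈ (φ (pair i j h)).val
  · exact ⟨b, hB⟩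
  exfalso
  push_neg at hA hB
  obtain ⟨j, hij, haj⟩ := hA
  obtain ⟨k, hik, hbk⟩ := hB
  have hjj0 : j ≠ j0 := by rintro rfl; exact haj haj0
  have hkj0 : k ≠ j0 := by rintro rfl; exact hbk hbj0
  have hbj : b ∈ (φ (pair i j hij)).val := (hab_mem j hij hjj0).resolve_left haj
  have hak : a ∈ (φ (pair i k hik)).val := (hab_mem k hik hkj0).resolve_right hbk
  have hjk : j ≠ k := by rintro rfl; exact haj hak
  obtain ⟨c, hcj, hck⟩ := hadj i j k hij hik hjk
  have hca : c ≠ a := fun h => haj (h ▸ hcj)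
  have hcb : c ≠ b := fun h => hbk (h ▸ hck)
  have hej : (φ (pair i j hij)).val = s(b, c) :=
    (Sym2.mem_and_mem_iff hcb.symm).mp ⟨hbj, hcj⟩
  have hek : (φ (pair i k hik)).val = s(a, c) :=
    (Sym2.mem_and_mem_iff hca.symm).mp ⟨hak, hck⟩
  -- pick a fifth element l
  have hcard : ({i, j0, j, k} : Finset (Fin n)).card < n := by
    have h1 := Finset.card_insert_le i ({j0, j, k} : Finset (Fin n))
    have h2 := Finset.card_insert_le j0 ({j, k} : Finset (Fin n))
    have h3 := Finset.card_insert_le j ({k} : Finset (Fin n))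
    simp only [Finset.card_singleton] at h3
    omega
  obtain ⟨l, hl⟩ := exists_not_mem_finset hn0 _ hcard
  simp only [Finset.mem_insert, Finset.mem_singleton, not_or] at hl
  obtain ⟨hli, hlj0, hlj, hlk⟩ := hl
  have hil : i ≠ l := Ne.symm hli
  -- e_l intersects the three edges s(a,b), s(b,c), s(a,c)
  have hab_l : a ∈ (φ (pair i l hil)).val ∨ b ∈ (φ (pair i l hil)).val :=
    hab_mem l hil hlj0
  have hbc_l : b ∈ (φ (pair i l hil)).val ∨ c ∈ (φ (pair i l hil)).val := by
    obtain ⟨x, hx1, hx2⟩ := hadj i l j hil hij hlj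
    rw [hej] at hx2
    rcases Sym2.mem_iff.mp hx2 with rfl | rfl
    · exact Or.inl hx1
    · exact Or.inr hx1
  have hac_l : a ∈ (φ (pair i l hil)).val ∨ c ∈ (φ (pair i l hil)).val := by
    obtain ⟨x, hx1, hx2⟩ := hadj i l k hil hik hlk
    rw [hek] at hx2
    rcases Sym2.mem_iff.mp hx2 with rfl | rfl
    · exact Or.inl hx1
    · exact Or.inr hx1
  have contra : ∀ (x y : Fin n), x ≠ y →
      x ∈ (φ (pair i l hil)).val → y ∈ (φ (pair i l hil)).val →
      ∀ (m : Fin n) (hm : i ≠ m), (φ (pair i m hm)).val = s(x, y) → l = m := by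
    intro x y hxy hx hy m hm hme
    apply eval_inj φ hil hm
    rw [(Sym2.mem_and_mem_iff hxy).mp ⟨hx, hy⟩, hme]
  rcases hab_l with ha | hb <;> rcases hbc_l with hb' | hc <;>
    rcases hac_l with ha' | hc'
  · exact hlj0 (contra a b hab ha hb' j0 h0 he0)
  · exact hlj0 (contra a b hab ha hb' j0 h0 he0)
  · exact hlk (contra a c hca.symm ha hc k hik hek)
  · exact hlk (contra a c hca.symm ha hc k hik hek)
  · exact hlj0 (contra a b hab ha' hb j0 h0 he0)
  · exact hlj (contra b c hcb.symm hb hc' j hij hej)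
  · exact hlk (contra a c hca.symm ha' hc k hik hek)
  · exact hlj (contra b c hcb.symm hb hc j hij hej)

lemma card_ne (a : Fin n) : Fintype.card {x : Fin n // x ≠ a} = n - 1 := by
  classical
  have : Fintype.card {x : Fin n // ¬ x = a} =
      Fintype.card (Fin n) - Fintype.card {x : Fin n // x = a} :=
    Fintype.card_subtype_compl _
  simpa [Fintype.card_subtype_eq] using this

lemma surj_onto (hn : 5 ≤ n) {i s : Fin n}
    (hs : ∀ j (h : i ≠ j), s ∈ (φ (pair i j h)).val) :
    ∀ t : Fin n, t ≠ s → ∃ (j : Fin n) (h : i ≠ j), (φ (pair i j h)).val = s(s, t) := by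
  classical
  intro t ht
  set F : {j : Fin n // j ≠ i} → {t : Fin n // t ≠ s} := fun j =>
    ⟨Sym2.Mem.other' (hs j.1 (Ne.symm j.2)), by
      have hnd : ¬ ((φ (pair i j.1 (Ne.symm j.2))).val).IsDiag :=
        (φ (pair i j.1 (Ne.symm j.2))).prop
      have := Sym2.other_ne hnd (hs j.1 (Ne.symm j.2))
      rwa [Sym2.other_eq_other'] at this⟩ with hF
  have hFspec : ∀ j : {j : Fin n // j ≠ i},
      (φ (pair i j.1 (Ne.symm j.2))).val = s(s, (F j).1) := by
    intro j
    exact (Sym2.other_spec' (hs j.1 (Ne.symm j.2))).symm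
  have hFinj : Function.Injective F := by
    intro j k hjk
    have h1 : (φ (pair i j.1 (Ne.symm j.2))).val = (φ (pair i k.1 (Ne.symm k.2))).val := by
      rw [hFspec j, hFspec k, hjk]
    exact Subtype.ext (eval_inj φ _ _ h1)
  have hFbij : Function.Bijective F :=
    (Fintype.bijective_iff_injective_and_card F).mpr ⟨hFinj, by rw [card_ne, card_ne]⟩
  obtain ⟨j, hj⟩ := hFbij.surjective ⟨t, ht⟩
  refine ⟨j.1, Ne.symm j.2, ?_⟩
  rw [hFspec j, hj]

end Aux

theorem stmt_5 (n : ℕ) (hn : 5 ≤ n) (φ : Equiv.Perm {z : Sym2 (Fin n) // ¬ z.IsDiag})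
    (hadj : ∀ (i j k : Fin n) (hij : i ≠ j) (hik : i ≠ k), j ≠ k →
      ∃ x, x ∈ (φ (pair i j hij)).val ∧ x ∈ (φ (pair i k hik)).val) :
    ∃ σ : Fin n → Fin n,
      (∀ (i j : Fin n) (h : i ≠ j), σ i ∈ (φ (pair i j h)).val) ∧
      (∀ (i x : Fin n), (∀ (j : Fin n) (h : i ≠ j), x ∈ (φ (pair i j h)).val) → x = σ i) ∧
      Function.Injective σ := by
  classical
  have hn0 : 0 < n := by omega
  choose σ hσ using exists_common φ hn hadj
  refine ⟨σ, hσ, ?_, ?_⟩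
  · -- uniqueness
    intro i x hx
    by_contra hxs
    -- pick two distinct elements ≠ i
    obtain ⟨j, hj⟩ := exists_not_mem_finset hn0 {i} (by simp; omega)
    obtain ⟨k, hk⟩ := exists_not_mem_finset hn0 {i, j} (by
      have := Finset.card_insert_le i ({j} : Finset (Fin n))
      simp only [Finset.card_singleton] at this
      omega)
    simp only [Finset.mem_singleton] at hj
    simp only [Finset.mem_insert, Finset.mem_singleton, not_or] at hk
    have hij : i ≠ j := Ne.symm hj
    have hik : i ≠ k := Ne.symm hk.1
    have h1 : (φ (pair i j hij)).val = s(x, σ i) :=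
      (Sym2.mem_and_mem_iff hxs).mp ⟨hx j hij, hσ i j hij⟩
    have h2 : (φ (pair i k hik)).val = s(x, σ i) :=
      (Sym2.mem_and_mem_iff hxs).mp ⟨hx k hik, hσ i k hik⟩
    exact hk.2 (eval_inj φ hij hik (h1.trans h2.symm)).symm
  · -- injectivity
    intro i i' hii
    by_contra hne
    set s := σ i with hs
    -- pick j distinct from i and i'
    obtain ⟨j, hj⟩ := exists_not_mem_finset hn0 {i, i'} (by
      have := Finset.card_insert_le i ({i'} : Finset (Fin n))
      simp only [Finset.card_singleton] at this
      omega)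
    simp only [Finset.mem_insert, Finset.mem_singleton, not_or] at hj
    have hij : i ≠ j := Ne.symm hj.1
    have hnd : ¬ ((φ (pair i j hij)).val).IsDiag := (φ (pair i j hij)).prop
    have hmem : s ∈ (φ (pair i j hij)).val := hσ i j hij
    set t := Sym2.Mem.other' hmem with htdef
    have hts : t ≠ s := by
      have := Sym2.other_ne hnd hmem
      rwa [Sym2.other_eq_other'] at this
    have hej : (φ (pair i j hij)).val = s(s, t) := (Sym2.other_spec' hmem).symm
    have hs' : ∀ m (h : i' ≠ m), s ∈ (φ (pair i' m h)).val := by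
      intro m h
      have := hσ i' m h
      rwa [← hii] at this
    obtain ⟨j', hij', hej'⟩ := surj_onto φ hn hs' t hts
    have heq : (φ (pair i j hij)).val = (φ (pair i' j' hij')).val := by
      rw [hej, hej']
    have hpair : pair i j hij = pair i' j' hij' := φ.injective (Subtype.ext heq)
    have h3 : s(i, j) = s(i', j') := congrArg Subtype.val hpair
    rcases Sym2.eq_iff.mp h3 with ⟨h4, _⟩ | ⟨_, h5⟩
    · exact hne h4
    · exact hj.2 h5
end

section
/- Let n ≥ 5, φ a permutation of the 2-element subsets 𝒫 of {1,...,n} satisfying the adjacency condition φ·{i,j} ∩ φ·{i,k} ≠ ∅ for all pairwise distinct i,j,k, and let σ(i) be the unique element of ⋂_{j≠i} φ·{i,j}. Then for M_i := {{i,j} : j ≠ i}, we have φ·M_i = M_{σ(i)} (the image of the set M_i under φ equals M_{σ(i)}). -/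
lemma mem_pair_aux {n : ℕ} (i : Fin n) (w : {z : Sym2 (Fin n) // ¬ z.IsDiag})
    (hw : i ∈ w.val) : ∃ j h, w = pair i j h := by
  obtain ⟨s, hs⟩ := w
  induction s using Sym2.ind with
  | _ x y =>
    simp only [Sym2.mem_iff] at hw
    rcases hw with rfl | rfl
    · exact ⟨y, by simpa using hs, rfl⟩
    · refine ⟨x, fun h => hs (by simp [h]), ?_⟩
      simp only [pair, Subtype.mk.injEq]
      exact Sym2.eq_swap

lemma star_eq_range {n : ℕ} (a : Fin n) :
    {z : {z : Sym2 (Fin n) // ¬ z.IsDiag} | a ∈ z.val} =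
      Set.range (fun j : {j : Fin n // j ≠ a} => pair a j.1 j.2.symm) := by
  ext z
  constructor
  · intro hz
    obtain ⟨j, h, rfl⟩ := mem_pair_aux a z hz
    exact ⟨⟨j, h.symm⟩, rfl⟩
  · rintro ⟨j, rfl⟩
    simp [pair]

lemma star_ncard {n : ℕ} (a : Fin n) :
    {z : {z : Sym2 (Fin n) // ¬ z.IsDiag} | a ∈ z.val}.ncard = n - 1 := by
  rw [star_eq_range, Set.ncard_eq_toFinset_card', Set.toFinset_range,
    Finset.card_image_of_injective]
  · rw [Finset.card_univ]
    have : Fintype.card {j : Fin n // ¬ j = a} = n - 1 := by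
      rw [Fintype.card_subtype_compl, Fintype.card_subtype_eq, Fintype.card_fin]
    simpa using this
  · intro j k h
    simp only [pair, Subtype.mk.injEq, Sym2.eq, Sym2.rel_iff', Prod.mk.injEq,
      Prod.swap_prod_mk] at h
    rcases h with ⟨-, h⟩ | ⟨-, h⟩
    · exact Subtype.ext h
    · exact absurd h j.2

theorem stmt_6 (n : ℕ) (hn : 5 ≤ n) (φ : Equiv.Perm {z : Sym2 (Fin n) // ¬ z.IsDiag})
    (hadj : ∀ (i j k : Fin n) (hij : i ≠ j) (hik : i ≠ k), j ≠ k →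
      ∃ x, x ∈ (φ (pair i j hij)).val ∧ x ∈ (φ (pair i k hik)).val)
    (σ : Fin n → Fin n)
    (hσ : ∀ (i j : Fin n) (h : i ≠ j), σ i ∈ (φ (pair i j h)).val)
    (hσuniq : ∀ (i x : Fin n), (∀ (j : Fin n) (h : i ≠ j), x ∈ (φ (pair i j h)).val) → x = σ i) :
    ∀ i : Fin n,
      (⇑φ) '' {z : {z : Sym2 (Fin n) // ¬ z.IsDiag} | i ∈ z.val} =
        {z : {z : Sym2 (Fin n) // ¬ z.IsDiag} | σ i ∈ z.val} := by
  intro i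
  apply Set.eq_of_subset_of_ncard_le
  · rintro z ⟨w, hw, rfl⟩
    obtain ⟨j, h, rfl⟩ := mem_pair_aux i w hw
    exact hσ i j h
  · rw [Set.ncard_image_of_injective _ φ.injective, star_ncard, star_ncard]
  · exact Set.toFinite _
end

section
/- Define the polynomial g(U,V,W,X,Y,Z) := 2U²Z + 2UVX − 2UVY − 2UVZ − 2UXW − 2UXZ + 2UYW − 2UYZ − 2UWZ + 2UZ² + 2V²Y − 2VXY − 2VXW + 2VY² − 2VYW − 2VYZ + 2VWZ + 2X²W − 2XYW + 2XYZ + 2XW² − 2XWZ. Then for any four points p_i, p_j, p_k, p_l ∈ ℝ² with squared distances d_{{a,b}} = ‖p_a − p_b‖², one has g(d_{{i,j}}, d_{{i,k}}, d_{{i,l}}, d_{{j,k}}, d_{{j,l}}, d_{{k,l}}) = 0. -/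
/-- The degree-3 polynomial relation satisfied by squared distances of 4 planar points. -/
def g (U V W X Y Z : ℝ) : ℝ :=
  2*U^2*Z + 2*U*V*X - 2*U*V*Y - 2*U*V*Z - 2*U*X*W - 2*U*X*Z + 2*U*Y*W - 2*U*Y*Z
    - 2*U*W*Z + 2*U*Z^2 + 2*V^2*Y - 2*V*X*Y - 2*V*X*W + 2*V*Y^2 - 2*V*Y*W
    - 2*V*Y*Z + 2*V*W*Z + 2*X^2*W - 2*X*Y*W + 2*X*Y*Z + 2*X*W^2 - 2*X*W*Z

theorem stmt_9 (pi pj pk pl : EuclideanSpace ℝ (Fin 2)) :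
    g (dist pi pj ^ 2) (dist pi pk ^ 2) (dist pi pl ^ 2)
      (dist pj pk ^ 2) (dist pj pl ^ 2) (dist pk pl ^ 2) = 0 := by
  have hsq : ∀ a b : EuclideanSpace ℝ (Fin 2),
      dist a b ^ 2 = (a 0 - b 0)^2 + (a 1 - b 1)^2 := by
    intro a b
    rw [EuclideanSpace.dist_eq, Real.sq_sqrt (by positivity)]
    simp [Fin.sum_univ_two, Real.dist_eq, sq_abs]
  simp only [g, hsq]
  ring
end
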